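/- arXiv:2302.10841 — 4 statements merged into one kernel-verified Lean document; each statement's English description precedes it below -/
import Mathlib

section
/- Let d be a nonnegative integer, let h ≥ d be real, and let β>0. Let N be a finite set of size d and define f: subsets of N → [0,1] by f(S) = exp(β(2|S|−d+h)) / (exp(β(2|S|−d+h)) + exp(−β(2|S|−d+h))) = (1/2)(1 + tanh(β(2|S|−d+h))). Then f is submodular: for all S,T ⊆ N, f(S)+f(T) ≥ f(S∪T)+f(S∩T). -/
/-!
The update probability depends on `S` only through `|S|`, namely it is `φ (β (2|S| - d + h))`
with `φ x = eˣ / (eˣ + e⁻ˣ)`. A function of the cardinality is submodular as soon as its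
increments `k ↦ g (k + t) - g k` are antitone, and `φ` has antitone increments on `[0, ∞)`
(it is concave there); `h ≥ d` keeps every argument `β (2|S| - d + h)` in that range.
-/

open Real Finset

noncomputable section

theorem Finset.card_submodular_of_antitone_increments {α G : Type*} [DecidableEq α]
    [AddCommGroup G] [PartialOrder G] [IsOrderedAddMonoid G] (g : ℕ → G)
    (hg : ∀ t, Antitone fun k ↦ g (k + t) - g k) (S T : Finset α) :
    g #(S ∪ T) + g #(S ∩ T) ≤ g #S + g #T := by
  have h : g (#T + #(S \ T)) - g #T ≤ g (#(S ∩ T) + #(S \ T)) - g #(S ∩ T) :=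
    hg #(S \ T) (card_le_card inter_subset_right)
  rw [card_inter_add_card_sdiff, add_comm #T, card_sdiff_add_card] at h
  simpa only [sub_le_sub_iff, add_comm] using h

def glauberProb (x : ℝ) : ℝ := exp x / (exp x + exp (-x))

lemma glauberProb_eq (x : ℝ) : glauberProb x = exp (2 * x) / (exp (2 * x) + 1) := by
  have hx : exp (2 * x) = exp x * exp x := by rw [← exp_add]; ring_nf
  rw [glauberProb, hx, exp_neg]
  field_simp

lemma antitoneOn_mul_div_mul_add_one_sub_div_add_one {s : ℝ} (hs : 1 ≤ s) :
    AntitoneOn (fun u ↦ u * s / (u * s + 1) - u / (u + 1)) (Set.Ici 1) := by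
  intro P (hP : 1 ≤ P) Q (hQ : 1 ≤ Q) hPQ
  have hincr (u : ℝ) (hu : 0 < u) :
      u * s / (u * s + 1) - u / (u + 1) = u * (s - 1) / ((u * s + 1) * (u + 1)) := by
    field_simp
    ring
  dsimp only
  rw [hincr P (by linarith), hincr Q (by linarith), div_le_div_iff₀ (by positivity) (by positivity)]
  -- after cross-multiplying, the difference of the two sides is `(s - 1) (Q - P) (P Q s - 1)`
  have hPQs : 1 ≤ P * Q * s := by nlinarith [mul_le_mul hP hQ zero_le_one (by linarith)]
  nlinarith [mul_nonneg (mul_nonneg (sub_nonneg.2 hPQ) (sub_nonneg.2 hs)) (sub_nonneg.2 hPQs)]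

lemma antitoneOn_glauberProb_add_sub {t : ℝ} (ht : 0 ≤ t) :
    AntitoneOn (fun x ↦ glauberProb (x + t) - glauberProb x) (Set.Ici 0) := by
  intro p (hp : 0 ≤ p) q (hq : 0 ≤ q) hpq
  have hsplit (x : ℝ) : exp (2 * (x + t)) = exp (2 * x) * exp (2 * t) := by
    rw [← exp_add]; ring_nf
  simp only [glauberProb_eq, hsplit]
  exact antitoneOn_mul_div_mul_add_one_sub_div_add_one (one_le_exp (by linarith))
    (one_le_exp (by linarith) : 1 ≤ exp (2 * p)) (one_le_exp (by linarith) : 1 ≤ exp (2 * q))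
    (exp_le_exp.2 (by linarith))

theorem local_update_submodular_general (d : ℕ) (h β : ℝ) (hh : (d : ℝ) ≤ h) (hβ : 0 < β)
    {N : Type*} [DecidableEq N]
    (f : Finset N → ℝ)
    (hf : ∀ S : Finset N,
      f S = exp (β * (2 * (S.card : ℝ) - d + h)) /
        (exp (β * (2 * (S.card : ℝ) - d + h)) + exp (-(β * (2 * (S.card : ℝ) - d + h)))))
    (S T : Finset N) :
    f (S ∪ T) + f (S ∩ T) ≤ f S + f T := by
  set g : ℕ → ℝ := fun k ↦ glauberProb (β * (2 * k - d + h))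
  have hfg (S : Finset N) : f S = g #S := hf S
  rw [hfg, hfg, hfg, hfg]
  refine card_submodular_of_antitone_increments g (fun t i k hik ↦ ?_) S T
  have harg (k : ℕ) : β * (2 * ((k + t : ℕ) : ℝ) - d + h) = β * (2 * k - d + h) + 2 * β * t := by
    push_cast; ring
  have hnonneg (k : ℕ) : 0 ≤ β * (2 * k - d + h) :=
    mul_nonneg hβ.le (by linarith [Nat.cast_nonneg (α := ℝ) k])
  simp only [g, harg]
  exact antitoneOn_glauberProb_add_sub (by positivity) (hnonneg i) (hnonneg k)
    (by gcongr)

/-- The Glauber local update probability of a vertex of degree `d` with external field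
`h ≥ d` is a submodular function of the set `S` of `+1`-neighbors. -/
theorem local_update_submodular (d : ℕ) (h β : ℝ) (hh : (d : ℝ) ≤ h) (hβ : 0 < β)
    {N : Type*} [Fintype N] [DecidableEq N] (hN : Fintype.card N = d)
    (f : Finset N → ℝ)
    (hf : ∀ S : Finset N,
      f S = exp (β * (2 * (S.card : ℝ) - d + h)) /
        (exp (β * (2 * (S.card : ℝ) - d + h)) + exp (-(β * (2 * (S.card : ℝ) - d + h)))))
    (S T : Finset N) :
    f (S ∪ T) + f (S ∩ T) ≤ f S + f T :=
  local_update_submodular_general d h β hh hβ f hf S T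

end
end

section
/- Let x, y, u, v be real numbers with x+y = u+v, x+y ≥ 0, and |x−y| ≤ |u−v|. Then tanh(x) + tanh(y) ≥ tanh(u) + tanh(v). -/
/-!
For a fixed sum `s = x + y`, `tanh x + tanh y = 2 sinh s / (cosh s + cosh (x - y))`. When `s ≥ 0`
the numerator is nonnegative, and the denominator grows with `|x - y|`, since `cosh` is even and
increasing on `[0, ∞)`.
-/

open Real

theorem tanh_add_tanh (a b : ℝ) :
    tanh a + tanh b = 2 * sinh (a + b) / (cosh (a + b) + cosh (a - b)) := by
  have := cosh_pos a
  have := cosh_pos b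
  rw [tanh_eq_sinh_div_cosh, tanh_eq_sinh_div_cosh, sinh_add, cosh_add, cosh_sub]
  field_simp
  ring

/-- If `x + y = u + v`, `x + y ≥ 0`, and `|x − y| ≤ |u − v|`, then
`tanh x + tanh y ≥ tanh u + tanh v`. -/
theorem tanh_sum_ge (x y u v : ℝ) (hsum : x + y = u + v) (hpos : 0 ≤ x + y)
    (hspread : |x - y| ≤ |u - v|) :
    Real.tanh u + Real.tanh v ≤ Real.tanh x + Real.tanh y := by
  rw [tanh_add_tanh, tanh_add_tanh, ← hsum]
  apply div_le_div_of_nonneg_left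
  · exact mul_nonneg zero_le_two (sinh_nonneg_iff.mpr hpos)
  · positivity
  · gcongr
    exact cosh_le_cosh.mpr hspread
end

section
/- For all real β ≥ 0, all real k ≥ 0, and every real s, tanh(β(s+k)) − tanh(β(s−k)) ≤ 2·tanh(kβ). -/
open Real

/-!
Write the two arguments as `x + h` and `x - h` with `h = kβ ≥ 0`. Then
`tanh (x + h) - tanh (x - h) = sinh (2h) / (cosh (x + h) cosh (x - h))`, and the
denominator equals `cosh² x + sinh² h ≥ 1 + sinh² h = cosh² h`, so the difference is at most
`sinh (2h) / cosh² h = 2 tanh h`.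
-/

namespace Real

theorem tanh_sub_tanh (x y : ℝ) :
    tanh x - tanh y = sinh (x - y) / (cosh x * cosh y) := by
  rw [tanh_eq_sinh_div_cosh, tanh_eq_sinh_div_cosh, sinh_sub,
    div_sub_div _ _ (cosh_pos x).ne' (cosh_pos y).ne']

theorem cosh_add_mul_cosh_sub (x y : ℝ) :
    cosh (x + y) * cosh (x - y) = cosh x ^ 2 + sinh y ^ 2 := by
  rw [cosh_add, cosh_sub]
  linear_combination cosh x ^ 2 * cosh_sq y + sinh y ^ 2 * cosh_sq_sub_sinh_sq x

theorem cosh_sq_le_cosh_add_mul_cosh_sub (x y : ℝ) :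
    cosh y ^ 2 ≤ cosh (x + y) * cosh (x - y) := by
  rw [cosh_add_mul_cosh_sub, cosh_sq' y]
  gcongr
  exact one_le_pow₀ (one_le_cosh x)

theorem tanh_add_sub_tanh_sub_le (x h : ℝ) (hh : 0 ≤ h) :
    tanh (x + h) - tanh (x - h) ≤ 2 * tanh h := by
  have hsinh : 0 ≤ sinh (2 * h) := sinh_nonneg_iff.mpr (by positivity)
  calc tanh (x + h) - tanh (x - h)
      = sinh (2 * h) / (cosh (x + h) * cosh (x - h)) := by
        rw [tanh_sub_tanh, add_sub_sub_cancel, ← two_mul]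
    _ ≤ sinh (2 * h) / cosh h ^ 2 := by
        gcongr
        exact cosh_sq_le_cosh_add_mul_cosh_sub x h
    _ = 2 * tanh h := by
        rw [sinh_two_mul, tanh_eq_sinh_div_cosh]
        field_simp

end Real

/-- For `β ≥ 0`, `k ≥ 0`, and any real `s`:
`tanh(β(s+k)) − tanh(β(s−k)) ≤ 2·tanh(kβ)`. -/
theorem tanh_diff_le (β k s : ℝ) (hβ : 0 ≤ β) (hk : 0 ≤ k) :
    Real.tanh (β * (s + k)) - Real.tanh (β * (s - k)) ≤ 2 * Real.tanh (k * β) := by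
  rw [show β * (s + k) = β * s + k * β by ring, show β * (s - k) = β * s - k * β by ring]
  exact tanh_add_sub_tanh_sub_le (β * s) (k * β) (mul_nonneg hk hβ)
end

section
/- Let G=(V,E) be a finite graph, β>0, and let the external field h be at least the maximum degree of G. Fix any initial configuration σ₀∈{−1,+1}^V. For S⊆V let X̃_t^S denote the S-corrupted Glauber dynamics with external field h, where S is pinned to +1 and the initial configuration is σ₀ with the spins on S set to +1. Then for every time t, the function S ↦ E[|{v∈V : X̃_t^S(v)=+1}|] is submodular: for all S,T⊆V it is at least as large summed over S and T as summed over S∪T and S∩T. -/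
open Real Finset
open scoped Classical

noncomputable section

variable {V : Type*} [Fintype V] [DecidableEq V]

/-- The real value of a spin: `true ↦ +1`, `false ↦ -1`. -/
def spinVal (b : Bool) : ℝ := if b then 1 else -1

/-- Sum of the spins of the neighbors of `v`. -/
def nbrSum (G : SimpleGraph V) (σ : V → Bool) (v : V) : ℝ :=
  ∑ u : V, if G.Adj v u then spinVal (σ u) else 0

/-- Glauber probability of updating `v` to `+1` in the presence of an external field `h`. -/
def glauberPField (β h : ℝ) (G : SimpleGraph V) (σ : V → Bool) (v : V) : ℝ :=
  exp (β * (nbrSum G σ v + h)) /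
    (exp (β * (nbrSum G σ v + h)) + exp (-(β * (nbrSum G σ v + h))))

/-- One-step kernel of the `S`-corrupted Glauber dynamics with external field `h`
and `S` pinned to `+1`. -/
def pinnedKField (G : SimpleGraph V) (β h : ℝ) (S : Finset V)
    (σ σ' : V → Bool) : ℝ :=
  (Fintype.card V : ℝ)⁻¹ * ∑ v : V,
    if v ∈ S then (if σ' = Function.update σ v true then 1 else 0)
    else (if σ' = Function.update σ v true then glauberPField β h G σ v else 0)
       + (if σ' = Function.update σ v false then 1 - glauberPField β h G σ v else 0)

/-- Evolution of a distribution under `t` steps of a Markov kernel. -/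
def evolve (K : (V → Bool) → (V → Bool) → ℝ) : ℕ → ((V → Bool) → ℝ) → ((V → Bool) → ℝ)
  | 0, ν => ν
  | t+1, ν => fun σ' => ∑ σ : V → Bool, evolve K t ν σ * K σ σ'

/-- Point mass at `σ₀`. -/
def delta (σ₀ : V → Bool) : (V → Bool) → ℝ := fun σ => if σ = σ₀ then 1 else 0

/-- Expected number of `+1` spins under the distribution `ν`. -/
def expPlus (ν : (V → Bool) → ℝ) : ℝ :=
  ∑ σ : V → Bool, ν σ * ((univ.filter (fun v => σ v = true)).card : ℝ)

/-- The initial configuration `σ₀` with the spins on `S` set to `+1`. -/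
def pinInit (S : Finset V) (σ₀ : V → Bool) : V → Bool :=
  fun v => if v ∈ S then true else σ₀ v

/-!
Couple the four pinned chains for `S`, `T`, `S ∪ T`, `S ∩ T` (indexed `0, 1, 2, 3`) so that,
at all times, the `S ∩ T` configuration lies below the meet and the `S ∪ T` configuration below
the join of the `S` and `T` configurations; the counts of `+1` spins then satisfy the submodular
inequality pathwise. One step of the coupling updates the same vertex in all four chains, with
the new spins drawn from a coupling of the four Bernoulli update laws that respects this order.
Such a coupling exists as soon as the update probabilities `p` satisfy `p₃ ≤ p₀ ⊓ p₁` and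
`p₂ + p₃ ≤ p₀ + p₁`. Since the update probability is `sigmoid (2β (S_v + h))` and the local
field `S_v` is modular in the configuration, the second inequality reduces to concavity of the
sigmoid on `[0, ∞)`, which is where `h ≥ max degree` (so `S_v + h ≥ 0`) enters.
-/

open Matrix

lemma inv_one_add_add_inv_one_add_le {a b d : ℝ} (ha : 0 < a) (hb : 0 < b) (had : a ≤ d)
    (hbd : b ≤ d) (hd : d ≤ 1) :
    (1 + a * b / d)⁻¹ + (1 + d)⁻¹ ≤ (1 + a)⁻¹ + (1 + b)⁻¹ := by
  have hd0 : 0 < d := ha.trans_le had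
  have hab : a * b ≤ 1 := by nlinarith
  have key : (1 + a)⁻¹ + (1 + b)⁻¹ - ((1 + a * b / d)⁻¹ + (1 + d)⁻¹)
      = (d - a) * (d - b) * (1 - a * b) / ((1 + a) * (1 + b) * (1 + d) * (d + a * b)) := by
    field_simp
    ring
  have : 0 ≤ (d - a) * (d - b) * (1 - a * b) / ((1 + a) * (1 + b) * (1 + d) * (d + a * b)) :=
    div_nonneg (mul_nonneg (mul_nonneg (by linarith) (by linarith)) (by linarith)) (by positivity)
  linarith

/-- Concavity of the sigmoid on `[0, ∞)`, in majorization form. -/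
lemma Real.sigmoid_add_sub_add_le {x y z : ℝ} (hx : 0 ≤ x) (hxy : x ≤ y) (hxz : x ≤ z) :
    sigmoid (y + z - x) + sigmoid x ≤ sigmoid y + sigmoid z := by
  simp only [sigmoid_def]
  rw [show exp (-(y + z - x)) = exp (-y) * exp (-z) / exp (-x) by
    rw [← exp_add, ← exp_sub]; ring_nf]
  exact inv_one_add_add_inv_one_add_le (exp_pos _) (exp_pos _) (exp_le_exp.2 (by linarith))
    (exp_le_exp.2 (by linarith)) (exp_le_one_iff.2 (by linarith))

def LatticeDominated {α : Type*} [Lattice α] (z : Fin 4 → α) : Prop :=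
  z 3 ≤ z 0 ⊓ z 1 ∧ z 2 ≤ z 0 ⊔ z 1

lemma latticeDominated_pi_iff {ι α : Type*} [Lattice α] {x : Fin 4 → ι → α} :
    LatticeDominated x ↔ ∀ u, LatticeDominated fun i => x i u := by
  simp only [LatticeDominated, Pi.le_def, Pi.inf_apply, Pi.sup_apply, forall_and]

lemma LatticeDominated.map_add_map_le {α M : Type*} [LinearOrder α] [AddCommMonoid M]
    [PartialOrder M] [IsOrderedAddMonoid M] {φ : α → M} (hφ : Monotone φ) {z : Fin 4 → α}
    (hz : LatticeDominated z) : φ (z 2) + φ (z 3) ≤ φ (z 0) + φ (z 1) :=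
  calc φ (z 2) + φ (z 3) ≤ φ (z 0 ⊔ z 1) + φ (z 0 ⊓ z 1) := add_le_add (hφ hz.2) (hφ hz.1)
    _ = φ (z 0) + φ (z 1) := by
      rcases le_total (z 0) (z 1) with h | h <;> simp [h, add_comm]

lemma LatticeDominated.sum_add_sum_le {ι α M : Type*} [LinearOrder α] [AddCommMonoid M]
    [PartialOrder M] [IsOrderedAddMonoid M] {φ : α → M} (hφ : Monotone φ) {x : Fin 4 → ι → α}
    (hx : LatticeDominated x) (s : Finset ι) :
    ∑ u ∈ s, φ (x 2 u) + ∑ u ∈ s, φ (x 3 u) ≤ ∑ u ∈ s, φ (x 0 u) + ∑ u ∈ s, φ (x 1 u) := by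
  simp only [← sum_add_distrib]
  exact sum_le_sum fun u _ => (latticeDominated_pi_iff.1 hx u).map_add_map_le hφ

lemma Fin.sum_pi_four {α M : Type*} [Fintype α] [AddCommMonoid M] (F : (Fin 4 → α) → M) :
    ∑ z, F z = ∑ a, ∑ b, ∑ c, ∑ d, F ![a, b, c, d] := by
  let e : (Fin 4 → α) ≃ α × α × α × α :=
    { toFun := fun z => (z 0, z 1, z 2, z 3)
      invFun := fun w => ![w.1, w.2.1, w.2.2.1, w.2.2.2]
      left_inv := fun z => by ext i; fin_cases i <;> rfl
      right_inv := fun _ => rfl }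
  rw [← e.symm.sum_comp]
  simp only [Fintype.sum_prod_type]
  rfl

/-- `μ` is a coupling of Bernoulli laws with success probabilities `p i`, carried by
lattice-dominated quadruples. -/
structure IsLatticeCoupling (μ : (Fin 4 → Bool) → ℝ) (p : Fin 4 → ℝ) : Prop where
  nonneg : ∀ z, 0 ≤ μ z
  latticeDominated : ∀ z, μ z ≠ 0 → LatticeDominated z
  marginal : ∀ i (g : Bool → ℝ), ∑ z, μ z * g (z i) = p i * g true + (1 - p i) * g false

lemma exists_mul_eq_of_le {a b : ℝ} (ha : 0 ≤ a) (hab : a ≤ b) :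
    ∃ r, 0 ≤ r ∧ r ≤ 1 ∧ r * b = a := by
  rcases ha.eq_or_lt with rfl | ha
  · exact ⟨0, le_rfl, zero_le_one, zero_mul b⟩
  · exact ⟨a / b, div_nonneg ha.le (by linarith), div_le_one_of_le₀ hab (by linarith),
      div_mul_cancel₀ a (by linarith)⟩

theorem exists_isLatticeCoupling {p : Fin 4 → ℝ} (hp0 : ∀ i, 0 ≤ p i) (hp1 : ∀ i, p i ≤ 1)
    (h3 : p 3 ≤ p 0 ⊓ p 1) (h23 : p 2 + p 3 ≤ p 0 + p 1) : ∃ μ, IsLatticeCoupling μ p := by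
  obtain ⟨h30, h31⟩ := le_inf_iff.1 h3
  have := hp0 3; have := hp1 0; have := hp1 1; have := hp1 2
  -- `q` is the probability that both `z 0` and `z 1` are `+1`
  obtain ⟨q, hq3, hq0, hq1, hq2, hq⟩ : ∃ q, p 3 ≤ q ∧ q ≤ p 0 ∧ q ≤ p 1 ∧
      q ≤ p 0 + p 1 - p 2 ∧ p 0 + p 1 - 1 ≤ q := by
    exact ⟨min (min (p 0) (p 1)) (p 0 + p 1 - p 2), by simp; grind, by simp,
      by simp, by simp, by simp; grind⟩
  obtain ⟨r, hr0, hr1, hr⟩ := exists_mul_eq_of_le (hp0 2) (show p 2 ≤ p 0 + p 1 - q by linarith)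
  -- joint law of `(z 0, z 1, z 3)`, then `z 2` given `z 0 ⊔ z 1`
  let m : Bool → Bool → Bool → ℝ
    | true, true, true => p 3
    | true, true, false => q - p 3
    | true, false, false => p 0 - q
    | false, true, false => p 1 - q
    | false, false, false => 1 - p 0 - p 1 + q
    | _, _, _ => 0
  let k : Bool → Bool → ℝ
    | true, true => r
    | true, false => 1 - r
    | false, true => 0
    | false, false => 1
  refine ⟨fun z => m (z 0) (z 1) (z 3) * k (z 0 || z 1) (z 2), ⟨?_, ?_, ?_⟩⟩
  · intro z
    apply mul_nonneg
    · cases z 0 <;> cases z 1 <;> cases z 3 <;> simp [m] <;> linarith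
    · cases z 0 <;> cases z 1 <;> cases z 2 <;> simp [k] <;> linarith
  · intro z hz
    simp only [LatticeDominated]
    cases h0 : z 0 <;> cases h1 : z 1 <;> cases h2 : z 2 <;> cases h3 : z 3 <;> simp_all [m, k]
  · intro i g
    rw [Fin.sum_pi_four]
    fin_cases i <;> simp [m, k] <;> first | ring1 | linear_combination (g true - g false) * hr

section MarkovCoupling

variable {α β : Type*} [Fintype α] [DecidableEq α] [Fintype β] [DecidableEq β]

lemma support_vecMul_pow_subset {Q : Matrix α α ℝ} {I : Set α}
    (hQ : ∀ x ∈ I, Function.support (Q x) ⊆ I) {ν : α → ℝ} (hν : Function.support ν ⊆ I)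
    (t : ℕ) : Function.support (ν ᵥ* Q ^ t) ⊆ I := by
  induction t with
  | zero => simpa using hν
  | succ t ih =>
    intro y hy
    rw [pow_succ, ← vecMul_vecMul] at hy
    obtain ⟨x, -, hx⟩ := exists_ne_zero_of_sum_ne_zero hy
    exact hQ x (ih (left_ne_zero_of_mul hx)) (right_ne_zero_of_mul hx)

lemma vecMul_pow_nonneg {Q : Matrix α α ℝ} {I : Set α}
    (hQ : ∀ x ∈ I, Function.support (Q x) ⊆ I) (hQ0 : ∀ x ∈ I, 0 ≤ Q x) {ν : α → ℝ}
    (hν : Function.support ν ⊆ I) (hν0 : 0 ≤ ν) (t : ℕ) : 0 ≤ ν ᵥ* Q ^ t := by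
  induction t with
  | zero => simpa using hν0
  | succ t ih =>
    intro y
    rw [pow_succ, ← vecMul_vecMul]
    refine sum_nonneg fun x _ => ?_
    by_cases hx : x ∈ I
    · exact mul_nonneg (ih x) (hQ0 x hx y)
    · rw [Function.notMem_support.1 fun h => hx (support_vecMul_pow_subset hQ hν t h), zero_mul]

lemma vecMul_pow_dotProduct_comp {Q : Matrix α α ℝ} {K : Matrix β β ℝ} {proj : α → β}
    {I : Set α} (hQ : ∀ x ∈ I, Function.support (Q x) ⊆ I)
    (hproj : ∀ x ∈ I, ∀ f : β → ℝ, (Q *ᵥ (f ∘ proj)) x = (K *ᵥ f) (proj x)) {x₀ : α} (hx₀ : x₀ ∈ I)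
    (t : ℕ) (f : β → ℝ) :
    (Pi.single x₀ 1 ᵥ* Q ^ t) ⬝ᵥ (f ∘ proj) = (Pi.single (proj x₀) 1 ᵥ* K ^ t) ⬝ᵥ f := by
  induction t generalizing f with
  | zero => simp
  | succ t ih =>
    have hsupp := support_vecMul_pow_subset hQ (ν := Pi.single x₀ 1)
      (by simpa [Pi.support_single] using hx₀) t
    rw [pow_succ, pow_succ, ← vecMul_vecMul, ← vecMul_vecMul,
      ← dotProduct_mulVec (Pi.single x₀ 1 ᵥ* Q ^ t),
      ← dotProduct_mulVec (Pi.single (proj x₀) 1 ᵥ* K ^ t), ← ih]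
    refine sum_congr rfl fun x _ => ?_
    by_cases hx : x ∈ I
    · rw [hproj x hx]; rfl
    · rw [Function.notMem_support.1 fun h => hx (hsupp h), zero_mul, zero_mul]

end MarkovCoupling

section Glauber

variable {V : Type*} [Fintype V] (G : SimpleGraph V) {β h : ℝ}

lemma spinVal_mono : Monotone spinVal := by
  rintro (_ | _) (_ | _) hab <;> norm_num [spinVal]
  exact absurd hab (by decide)

lemma nbrSum_eq_sum_neighborFinset (σ : V → Bool) (v : V) :
    nbrSum G σ v = ∑ u ∈ G.neighborFinset v, spinVal (σ u) := by
  rw [nbrSum, ← sum_filter, SimpleGraph.neighborFinset_eq_filter]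

lemma nbrSum_mono {σ τ : V → Bool} (hστ : σ ≤ τ) (v : V) : nbrSum G σ v ≤ nbrSum G τ v := by
  simp only [nbrSum_eq_sum_neighborFinset]
  exact sum_le_sum fun u _ => spinVal_mono (hστ u)

lemma neg_degree_le_nbrSum (σ : V → Bool) (v : V) : -(G.degree v : ℝ) ≤ nbrSum G σ v := by
  have neg_one_le_spinVal (b : Bool) : -1 ≤ spinVal b := by cases b <;> norm_num [spinVal]
  rw [nbrSum_eq_sum_neighborFinset, ← SimpleGraph.card_neighborFinset_eq_degree]
  simpa using sum_le_sum fun u (_ : u ∈ G.neighborFinset v) => neg_one_le_spinVal (σ u)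

lemma LatticeDominated.nbrSum_add_le {x : Fin 4 → V → Bool} (hx : LatticeDominated x) (v : V) :
    nbrSum G (x 2) v + nbrSum G (x 3) v ≤ nbrSum G (x 0) v + nbrSum G (x 1) v := by
  simp only [nbrSum_eq_sum_neighborFinset]
  exact hx.sum_add_sum_le spinVal_mono _

lemma glauberPField_eq_sigmoid (σ : V → Bool) (v : V) :
    glauberPField β h G σ v = sigmoid (2 * β * (nbrSum G σ v + h)) := by
  rw [glauberPField, sigmoid_def, show -(2 * β * (nbrSum G σ v + h))
    = -(β * (nbrSum G σ v + h)) - β * (nbrSum G σ v + h) by ring, exp_sub]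
  field_simp

def pinnedProb (G : SimpleGraph V) (β h : ℝ) (S : Finset V) (σ : V → Bool) (v : V) : ℝ :=
  if v ∈ S then 1 else glauberPField β h G σ v

lemma pinnedProb_nonneg (S : Finset V) (σ : V → Bool) (v : V) : 0 ≤ pinnedProb G β h S σ v := by
  unfold pinnedProb
  split_ifs
  · exact zero_le_one
  · rw [glauberPField_eq_sigmoid]; exact sigmoid_nonneg _

lemma pinnedProb_le_one (S : Finset V) (σ : V → Bool) (v : V) : pinnedProb G β h S σ v ≤ 1 := by
  unfold pinnedProb
  split_ifs
  · exact le_rfl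
  · rw [glauberPField_eq_sigmoid]; exact sigmoid_le_one _

lemma pinnedKField_mulVec [DecidableEq V] (S : Finset V) (f : (V → Bool) → ℝ) (σ : V → Bool) :
    (Matrix.of (pinnedKField G β h S) *ᵥ f) σ = (Fintype.card V : ℝ)⁻¹ * ∑ v,
      (pinnedProb G β h S σ v * f (Function.update σ v true)
        + (1 - pinnedProb G β h S σ v) * f (Function.update σ v false)) := by
  simp only [mulVec, dotProduct, Matrix.of_apply, pinnedKField, mul_assoc, ← mul_sum, sum_mul]
  rw [sum_comm]
  congr 1
  refine sum_congr rfl fun v _ => ?_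
  by_cases hv : v ∈ S <;> simp [pinnedProb, hv, add_mul, ite_mul, sum_add_distrib]

end Glauber

section CoupledDynamics

variable {V : Type*} [Fintype V] [DecidableEq V] {ι : Type*} [Fintype ι] [DecidableEq ι]

def setColumn (x : ι → V → Bool) (v : V) (z : ι → Bool) : ι → V → Bool :=
  fun i => Function.update (x i) v (z i)

def coupledKernel (μ : (ι → V → Bool) → V → (ι → Bool) → ℝ) :
    Matrix (ι → V → Bool) (ι → V → Bool) ℝ :=
  Matrix.of fun x y => (Fintype.card V : ℝ)⁻¹ * ∑ v, ∑ z, if y = setColumn x v z then μ x v z else 0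

lemma coupledKernel_mulVec (μ : (ι → V → Bool) → V → (ι → Bool) → ℝ)
    (F : (ι → V → Bool) → ℝ) (x : ι → V → Bool) :
    (coupledKernel μ *ᵥ F) x =
      (Fintype.card V : ℝ)⁻¹ * ∑ v, ∑ z, μ x v z * F (setColumn x v z) := by
  simp only [mulVec, dotProduct, coupledKernel, Matrix.of_apply, mul_assoc, ← mul_sum, sum_mul]
  rw [sum_comm]
  refine congrArg _ (sum_congr rfl fun v _ => ?_)
  rw [sum_comm]
  simp [ite_mul]

lemma coupledKernel_nonneg {μ : (ι → V → Bool) → V → (ι → Bool) → ℝ} {x : ι → V → Bool}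
    (hμ : ∀ v z, 0 ≤ μ x v z) : 0 ≤ coupledKernel μ x := fun y =>
  mul_nonneg (by positivity) <| sum_nonneg fun v _ => sum_nonneg fun z _ => by
    split_ifs
    exacts [hμ v z, le_rfl]

omit [Fintype V] in
lemma LatticeDominated.setColumn {x : Fin 4 → V → Bool} (hx : LatticeDominated x) (v : V)
    {z : Fin 4 → Bool} (hz : LatticeDominated z) : LatticeDominated (setColumn x v z) := by
  refine latticeDominated_pi_iff.2 fun u => ?_
  rcases eq_or_ne u v with rfl | hu
  · simpa [_root_.setColumn] using hz
  · simpa [_root_.setColumn, hu] using latticeDominated_pi_iff.1 hx u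

lemma support_coupledKernel_subset {μ : (Fin 4 → V → Bool) → V → (Fin 4 → Bool) → ℝ}
    {x : Fin 4 → V → Bool} (hx : LatticeDominated x)
    (hμ : ∀ v z, μ x v z ≠ 0 → LatticeDominated z) :
    Function.support (coupledKernel μ x) ⊆ {y | LatticeDominated y} := by
  intro y hy
  obtain ⟨v, -, hv⟩ := exists_ne_zero_of_sum_ne_zero (right_ne_zero_of_mul hy)
  obtain ⟨z, -, hz⟩ := exists_ne_zero_of_sum_ne_zero hv
  split_ifs at hz with hyz
  · exact hyz ▸ hx.setColumn v (hμ v z hz)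
  · exact absurd rfl hz

variable (G : SimpleGraph V) {β h : ℝ}

lemma exists_isLatticeCoupling_pinnedProb (hβ : 0 ≤ β) (hh : ∀ v, (G.degree v : ℝ) ≤ h)
    {A : Fin 4 → Finset V} (hA : LatticeDominated A) {x : Fin 4 → V → Bool}
    (hx : LatticeDominated x) (v : V) :
    ∃ μ, IsLatticeCoupling μ fun i => pinnedProb G β h (A i) (x i) v := by
  set y := fun i => 2 * β * (nbrSum G (x i) v + h)
  have hy3 : 0 ≤ y 3 :=
    mul_nonneg (by positivity) (by linarith [neg_degree_le_nbrSum G (x 3) v, hh v])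
  have hy30 : y 3 ≤ y 0 := mul_le_mul_of_nonneg_left
    (add_le_add (nbrSum_mono G (hx.1.trans inf_le_left) v) le_rfl) (by positivity)
  have hy31 : y 3 ≤ y 1 := mul_le_mul_of_nonneg_left
    (add_le_add (nbrSum_mono G (hx.1.trans inf_le_right) v) le_rfl) (by positivity)
  have hy : y 2 + y 3 ≤ y 0 + y 1 := by
    have := mul_le_mul_of_nonneg_left (hx.nbrSum_add_le G v) (by positivity : 0 ≤ 2 * β)
    simp only [y]; linarith
  have hsig : sigmoid (y 2) + sigmoid (y 3) ≤ sigmoid (y 0) + sigmoid (y 1) :=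
    calc sigmoid (y 2) + sigmoid (y 3) ≤ sigmoid (y 0 + y 1 - y 3) + sigmoid (y 3) :=
          add_le_add (sigmoid_le (by linarith)) le_rfl
      _ ≤ sigmoid (y 0) + sigmoid (y 1) := sigmoid_add_sub_add_le hy3 hy30 hy31
  have hp i : pinnedProb G β h (A i) (x i) v = if v ∈ A i then 1 else sigmoid (y i) := by
    simp only [pinnedProb, glauberPField_eq_sigmoid, y]
  have h3 : v ∈ A 3 → v ∈ A 0 ∧ v ∈ A 1 := fun hv => by simpa using hA.1 hv
  have h2 : v ∈ A 2 → v ∈ A 0 ∨ v ∈ A 1 := fun hv => by simpa using hA.2 hv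
  have := sigmoid_le hy30; have := sigmoid_le hy31
  have := sigmoid_le_one (y 0); have := sigmoid_le_one (y 1)
  have := sigmoid_le_one (y 2); have := sigmoid_le_one (y 3)
  refine exists_isLatticeCoupling (fun i => pinnedProb_nonneg G _ _ _)
    (fun i => pinnedProb_le_one G _ _ _) ?_ ?_
  all_goals
    simp only [hp, le_inf_iff]
    split_ifs <;> (try constructor) <;> first | linarith | tauto

lemma exists_pinnedProb_coupling (hβ : 0 ≤ β) (hh : ∀ v, (G.degree v : ℝ) ≤ h)
    {A : Fin 4 → Finset V} (hA : LatticeDominated A) :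
    ∃ μ : (Fin 4 → V → Bool) → V → (Fin 4 → Bool) → ℝ, ∀ x, LatticeDominated x → ∀ v,
      IsLatticeCoupling (μ x v) fun i => pinnedProb G β h (A i) (x i) v := by
  have (x : Fin 4 → V → Bool) (v : V) : ∃ μ : (Fin 4 → Bool) → ℝ, LatticeDominated x →
      IsLatticeCoupling μ fun i => pinnedProb G β h (A i) (x i) v := by
    by_cases hx : LatticeDominated x
    · obtain ⟨μ, hμ⟩ := exists_isLatticeCoupling_pinnedProb G hβ hh hA hx v
      exact ⟨μ, fun _ => hμ⟩
    · exact ⟨0, fun h => absurd h hx⟩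
  choose μ hμ using this
  exact ⟨μ, fun x hx v => hμ x v hx⟩

lemma coupledKernel_mulVec_comp_apply {A : Fin 4 → Finset V}
    {μ : (Fin 4 → V → Bool) → V → (Fin 4 → Bool) → ℝ} {x : Fin 4 → V → Bool}
    (hμ : ∀ v, IsLatticeCoupling (μ x v) fun i => pinnedProb G β h (A i) (x i) v)
    (i : Fin 4) (f : (V → Bool) → ℝ) :
    (coupledKernel μ *ᵥ (f ∘ fun y => y i)) x =
      (Matrix.of (pinnedKField G β h (A i)) *ᵥ f) (x i) := by
  rw [coupledKernel_mulVec, pinnedKField_mulVec]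
  exact congrArg _ <| sum_congr rfl fun v _ =>
    (hμ v).marginal i fun b => f (Function.update (x i) v b)

end CoupledDynamics

lemma evolve_eq_vecMul_pow {V : Type*} [Fintype V] [DecidableEq V]
    (K : (V → Bool) → (V → Bool) → ℝ) (t : ℕ) (ν : (V → Bool) → ℝ) :
    evolve K t ν = ν ᵥ* Matrix.of K ^ t := by
  induction t with
  | zero => simp [evolve]
  | succ t ih =>
    change evolve K t ν ᵥ* Matrix.of K = _
    rw [ih, vecMul_vecMul, pow_succ]

lemma delta_eq_single {V : Type*} [Fintype V] (σ₀ : V → Bool) : delta σ₀ = Pi.single σ₀ 1 := by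
  funext σ
  simp [delta, Pi.single_apply]

lemma latticeDominated_pinInit {V : Type*} [DecidableEq V] {A : Fin 4 → Finset V}
    (hA : LatticeDominated A) (σ₀ : V → Bool) : LatticeDominated fun i => pinInit (A i) σ₀ := by
  refine latticeDominated_pi_iff.2 fun v => ?_
  have h3 : v ∈ A 3 → v ∈ A 0 ∧ v ∈ A 1 := fun hv => by simpa using hA.1 hv
  have h2 : v ∈ A 2 → v ∈ A 0 ∨ v ∈ A 1 := fun hv => by simpa using hA.2 hv
  simp only [LatticeDominated, pinInit]
  split_ifs <;> simp_all

lemma LatticeDominated.card_filter_add_le {V : Type*} [Fintype V] {x : Fin 4 → V → Bool}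
    (hx : LatticeDominated x) :
    (#{v | x 2 v = true} : ℝ) + #{v | x 3 v = true}
      ≤ #{v | x 0 v = true} + #{v | x 1 v = true} := by
  simp only [card_filter]
  push_cast
  refine hx.sum_add_sum_le (φ := fun b => if b = true then (1 : ℝ) else 0) ?_ univ
  rintro (_ | _) (_ | _) hab <;> norm_num
  exact absurd hab (by decide)

theorem expPlus_evolve_pinnedKField_add_le {V : Type*} [Fintype V] [DecidableEq V]
    (G : SimpleGraph V) {β h : ℝ} (hβ : 0 ≤ β) (hh : ∀ v, (G.degree v : ℝ) ≤ h)
    {A : Fin 4 → Finset V} (hA : LatticeDominated A) (σ₀ : V → Bool) (t : ℕ) :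
    expPlus (evolve (pinnedKField G β h (A 2)) t (delta (pinInit (A 2) σ₀)))
      + expPlus (evolve (pinnedKField G β h (A 3)) t (delta (pinInit (A 3) σ₀)))
    ≤ expPlus (evolve (pinnedKField G β h (A 0)) t (delta (pinInit (A 0) σ₀)))
      + expPlus (evolve (pinnedKField G β h (A 1)) t (delta (pinInit (A 1) σ₀))) := by
  obtain ⟨μ, hμ⟩ := exists_pinnedProb_coupling G hβ hh hA
  have hQ (x) (hx : x ∈ {x | LatticeDominated x}) :=
    support_coupledKernel_subset hx fun v => (hμ x hx v).latticeDominated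
  set x₀ : Fin 4 → V → Bool := fun i => pinInit (A i) σ₀
  have hx₀ : Function.support (Pi.single x₀ (1 : ℝ)) ⊆ {x | LatticeDominated x} := by
    simpa [Pi.support_single] using latticeDominated_pinInit hA σ₀
  have hsupp := support_vecMul_pow_subset hQ hx₀ t
  have hE (i : Fin 4) : expPlus (evolve (pinnedKField G β h (A i)) t (delta (pinInit (A i) σ₀)))
      = (Pi.single x₀ 1 ᵥ* coupledKernel μ ^ t) ⬝ᵥ fun x => (#{v | x i v = true} : ℝ) := by
    rw [expPlus, evolve_eq_vecMul_pow, delta_eq_single]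
    exact (vecMul_pow_dotProduct_comp hQ (fun x hx => coupledKernel_mulVec_comp_apply G (hμ x hx) i)
      (x₀ := x₀) (latticeDominated_pinInit hA σ₀) t fun σ => (#{v | σ v = true} : ℝ)).symm
  simp only [hE, ← dotProduct_add]
  refine sum_le_sum fun x _ => ?_
  by_cases hx : LatticeDominated x
  · exact mul_le_mul_of_nonneg_left hx.card_filter_add_le
      (vecMul_pow_nonneg hQ (fun x hx => coupledKernel_nonneg (hμ x hx · |>.nonneg))
        hx₀ (Pi.single_nonneg.2 zero_le_one) t x)
  · rw [Function.notMem_support.1 fun h => hx (hsupp h), zero_mul, zero_mul]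

/-- **Dynamic submodularity under a strong external field.** If the external field `h`
is at least the maximum degree of `G`, then for every time `t` the expected number of
`+1` spins of the `S`-corrupted Glauber dynamics (pinned to `+1`, started from `σ₀`
with `S` set to `+1`) is a submodular function of `S`. -/
theorem dynamic_submodular (G : SimpleGraph V) (β h : ℝ) (hβ : 0 < β)
    (hh : ∀ v : V, (G.degree v : ℝ) ≤ h)
    (σ₀ : V → Bool) (t : ℕ) (S T : Finset V) :
    expPlus (evolve (pinnedKField G β h (S ∪ T)) t (delta (pinInit (S ∪ T) σ₀)))
      + expPlus (evolve (pinnedKField G β h (S ∩ T)) t (delta (pinInit (S ∩ T) σ₀)))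
    ≤ expPlus (evolve (pinnedKField G β h S) t (delta (pinInit S σ₀)))
      + expPlus (evolve (pinnedKField G β h T) t (delta (pinInit T σ₀))) :=
  expPlus_evolve_pinnedKField_add_le G hβ.le hh (A := ![S, T, S ∪ T, S ∩ T]) ⟨le_rfl, le_rfl⟩ σ₀ t

end
end
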